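/- Let m ≥ 1, let q be a natural number coprime to m, and let x ∈ ZMod m be an element of additive order i. Then for every natural number k, one has q^k·x = x in ZMod m if and only if k_i divides k, where k_i is the multiplicative order of q in (ZMod i)ˣ. In particular, the length of the cycle of x under the permutation x ↦ q·x of ZMod m equals k_i. -/
import Mathlib


/-- Cycle structure of multiplication by `q` on `ZMod m`: if `q` is coprime to `m` and
`x ∈ ZMod m` has additive order `i`, then `q^k · x = x` iff `k_i ∣ k`, where `k_i` is the
multiplicative order of `q` in `(ZMod i)ˣ`; in particular the cycle of `x` under `x ↦ q·x`
has length `k_i`. -/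
theorem mul_q_cycle_length (m q i : ℕ) [NeZero m] (hq : Nat.Coprime q m)
    (x : ZMod m) (hi : addOrderOf x = i) :
    (∀ k : ℕ, (q : ZMod m) ^ k * x = x ↔ orderOf (q : ZMod i) ∣ k) ∧
      Function.minimalPeriod (fun y : ZMod m => (q : ZMod m) * y) x =
        orderOf (q : ZMod i) := by
  have hipos : 0 < i := hi ▸ addOrderOf_pos x
  haveI : NeZero i := ⟨hipos.ne'⟩
  have him : i ∣ m := by
    rw [← hi]
    apply addOrderOf_dvd_of_nsmul_eq_zero
    simp [nsmul_eq_mul]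
  have key : ∀ k : ℕ, (q : ZMod m) ^ k * x = x ↔ orderOf (q : ZMod i) ∣ k := by
    intro k
    rw [orderOf_dvd_iff_pow_eq_one]
    have h1 : (q : ZMod m) ^ k * x = ((q : ℤ) ^ k) • x := by
      push_cast [zsmul_eq_mul]
      ring
    have h2 : ((q : ℤ) ^ k) • x - x = ((q : ℤ) ^ k - 1) • x := by
      rw [sub_zsmul, one_zsmul, sub_eq_add_neg]
    rw [h1, ← sub_eq_zero, h2, ← addOrderOf_dvd_iff_zsmul_eq_zero, hi,
      ← ZMod.intCast_zmod_eq_zero_iff_dvd, Int.cast_sub, Int.cast_one, sub_eq_zero]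
    push_cast
    rfl
  refine ⟨key, ?_⟩
  have hit : ∀ k : ℕ, Function.IsPeriodicPt (fun y : ZMod m => (q : ZMod m) * y) k x ↔
      orderOf (q : ZMod i) ∣ k := by
    intro k
    rw [Function.IsPeriodicPt, Function.IsFixedPt, mul_left_iterate]
    exact key k
  exact Nat.dvd_antisymm
    (Function.IsPeriodicPt.minimalPeriod_dvd ((hit _).mpr dvd_rfl))
    ((hit _).mp (Function.isPeriodicPt_minimalPeriod _ _))
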